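/- arXiv:2010.14050 — 8 statements merged into one kernel-verified Lean document; each statement's English description precedes it below -/
import Mathlib

section
/- Let N ≥ 1 and let A be a real N×N matrix with A_{ii} ≠ 0 for every i. Assume A is irreducible (for every pair of indices i ≠ j there exist indices i = i₀, i₁, …, i_r = j with A_{i_s, i_{s+1}} ≠ 0 for all s), that ∑_{j≠i} |A_{ij}| ≤ |A_{ii}| for every row i, and that this inequality is strict for at least one row i. Then the spectral radius of the Jacobi iteration matrix I − D⁻¹A (where D is the diagonal part of A) is strictly less than 1; consequently A is invertible and, for every b ∈ ℝ^N and every initial vector U⁰, the Jacobi iterates U^m = (I − D⁻¹A)U^{m−1} + D⁻¹b converge to the unique solution of AU = b. -/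
/-!
Put `B = I - D⁻¹A`. Its diagonal vanishes and its absolute row sums are at most `1`, with strict
inequality in some row `k`. Let `B x = μ x` with `x ≠ 0` and `|μ| ≥ 1`. At an index `i` where
`|x i|` is maximal, `|x i| ≤ |μ| |x i| ≤ ∑ⱼ |B i j| |x j| ≤ |x i|`, so equality holds throughout:
`|x j| = |x i|` whenever `B i j ≠ 0`, and the `i`-th row sum is `1`. By irreducibility the maximum
propagates along nonzero entries to row `k`, a contradiction. Hence the spectral radius is `< 1`,
so `Bⁿ → 0` by Gelfand's formula; `A` is invertible since `A v = 0` would make `1` an eigenvalue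
of `B`; and the error `Bᵐ (U⁰ - U*)` of the iteration tends to `0`.
-/

open Filter Topology Matrix Finset Relation

theorem Relation.reflTransGen_of_chain {α : Type*} (r : α → α → Prop) (c : ℕ → α) {n : ℕ}
    (h : ∀ s < n, r (c s) (c (s + 1))) : ReflTransGen r (c 0) (c n) :=
  (reflTransGen_of_succ_of_le (fun s t => r (c s) (c t)) (fun s hs => h s hs.2)
    n.zero_le).lift c fun _ _ => id

theorem tendsto_pow_atTop_nhds_zero_of_spectralRadius_lt_one {A : Type*} [NormedRing A]
    [NormedAlgebra ℂ A] [CompleteSpace A] {a : A} (ha : spectralRadius ℂ a < 1) :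
    Tendsto (a ^ ·) atTop (𝓝 0) := by
  obtain ⟨r, hρr, hr1⟩ := ENNReal.lt_iff_exists_nnreal_btwn.1 ha
  have hbound : ∀ᶠ n : ℕ in atTop, ‖a ^ n‖₊ ≤ r ^ n := by
    have gelfand := spectrum.pow_nnnorm_pow_one_div_tendsto_nhds_spectralRadius a
    filter_upwards [gelfand.eventually_lt_const hρr, eventually_ge_atTop 1] with n hn hn1
    have hn_pos : (0 : ℝ) < n := by exact_mod_cast hn1
    rw [one_div, ENNReal.rpow_inv_lt_iff hn_pos, ENNReal.rpow_natCast] at hn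
    exact_mod_cast hn.le
  refine squeeze_zero_norm' (hbound.mono fun n hn => ?_)
    (tendsto_pow_atTop_nhds_zero_of_lt_one r.coe_nonneg (by exact_mod_cast hr1))
  exact_mod_cast hn

namespace Matrix

section RowSums

variable {ι 𝕜 : Type*} [Fintype ι] [NormedField 𝕜] {B : Matrix ι ι 𝕜} {x : ι → 𝕜} {μ : 𝕜}

theorem norm_le_sum_norm_mul_of_mulVec_eq_smul (hx : B *ᵥ x = μ • x) (hμ : 1 ≤ ‖μ‖) (i : ι) :
    ‖x i‖ ≤ ∑ j, ‖B i j‖ * ‖x j‖ :=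
  calc ‖x i‖ ≤ ‖μ‖ * ‖x i‖ := le_mul_of_one_le_left (norm_nonneg _) hμ
    _ = ‖∑ j, B i j * x j‖ := by rw [← norm_mul, ← smul_eq_mul, ← Pi.smul_apply, ← hx]; rfl
    _ ≤ ∑ j, ‖B i j‖ * ‖x j‖ := (norm_sum_le _ _).trans_eq (by simp only [norm_mul])

theorem one_le_sum_norm_of_mulVec_eq_smul (hx : B *ᵥ x = μ • x) (hμ : 1 ≤ ‖μ‖) {i : ι}
    (hmax : ∀ j, ‖x j‖ ≤ ‖x i‖) (hxi : x i ≠ 0) : 1 ≤ ∑ j, ‖B i j‖ := by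
  have key := calc
    1 * ‖x i‖ ≤ ∑ j, ‖B i j‖ * ‖x j‖ := by
      rw [one_mul]; exact norm_le_sum_norm_mul_of_mulVec_eq_smul hx hμ i
    _ ≤ ∑ j, ‖B i j‖ * ‖x i‖ :=
      sum_le_sum fun j _ => mul_le_mul_of_nonneg_left (hmax j) (norm_nonneg _)
    _ = (∑ j, ‖B i j‖) * ‖x i‖ := (sum_mul ..).symm
  exact le_of_mul_le_mul_right key (norm_pos_iff.2 hxi)

theorem norm_eq_of_mulVec_eq_smul (hx : B *ᵥ x = μ • x) (hμ : 1 ≤ ‖μ‖) {i j : ι}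
    (hrow : ∑ k, ‖B i k‖ ≤ 1) (hmax : ∀ k, ‖x k‖ ≤ ‖x i‖) (hij : B i j ≠ 0) :
    ‖x j‖ = ‖x i‖ := by
  have hle : ∀ k ∈ univ, ‖B i k‖ * ‖x k‖ ≤ ‖B i k‖ * ‖x i‖ :=
    fun k _ => mul_le_mul_of_nonneg_left (hmax k) (norm_nonneg _)
  have hsum : ∑ k, ‖B i k‖ * ‖x k‖ = ∑ k, ‖B i k‖ * ‖x i‖ := by
    refine le_antisymm (sum_le_sum hle) ?_
    calc ∑ k, ‖B i k‖ * ‖x i‖ = (∑ k, ‖B i k‖) * ‖x i‖ := (sum_mul ..).symm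
      _ ≤ ‖x i‖ := mul_le_of_le_one_left (norm_nonneg _) hrow
      _ ≤ ∑ k, ‖B i k‖ * ‖x k‖ := norm_le_sum_norm_mul_of_mulVec_eq_smul hx hμ i
  exact mul_left_cancel₀ (norm_ne_zero_iff.2 hij) ((sum_eq_sum_iff_of_le hle).1 hsum j (mem_univ j))

theorem norm_lt_one_of_mulVec_eq_smul (hrow : ∀ i, ∑ j, ‖B i j‖ ≤ 1)
    (hchain : ∀ i, ∃ k, ReflTransGen (fun i j => B i j ≠ 0) i k ∧ ∑ j, ‖B k j‖ < 1)
    (hx : B *ᵥ x = μ • x) (hx0 : x ≠ 0) : ‖μ‖ < 1 := by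
  by_contra! hμ
  obtain ⟨i₀, hi₀⟩ := Function.ne_iff.1 hx0
  have : Nonempty ι := ⟨i₀⟩
  obtain ⟨i, hmax⟩ := Finite.exists_max fun j => ‖x j‖
  obtain ⟨k, hik, hk⟩ := hchain i
  have hmax_k : ∀ j, ‖x j‖ ≤ ‖x k‖ := by
    clear hk
    induction hik with
    | refl => exact hmax
    | tail _ hjk ih =>
      exact fun l => (ih l).trans (norm_eq_of_mulVec_eq_smul hx hμ (hrow _) ih hjk).ge
  have hxk : x k ≠ 0 := norm_pos_iff.1 ((norm_pos_iff.2 hi₀).trans_le (hmax_k i₀))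
  exact hk.not_ge (one_le_sum_norm_of_mulVec_eq_smul hx hμ hmax_k hxk)

end RowSums

section Spectrum

variable {ι : Type*} [Fintype ι] [DecidableEq ι]

theorem exists_mulVec_eq_smul_of_mem_spectrum {K : Type*} [Field K] {M : Matrix ι ι K} {μ : K}
    (hμ : μ ∈ spectrum K M) : ∃ x ≠ 0, M *ᵥ x = μ • x := by
  rw [← spectrum_toLin', ← Module.End.hasEigenvalue_iff_mem_spectrum] at hμ
  obtain ⟨x, hx⟩ := hμ.exists_hasEigenvector
  exact ⟨x, hx.2, by simpa using hx.apply_eq_smul⟩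

/- Matrices carry no global norm. Any submultiplicative one will do here, since neither the
spectral radius nor the topology of `Matrix ι ι ℂ` depends on the choice. -/
theorem spectralRadius_lt_one_of_forall_norm_lt_one {M : Matrix ι ι ℂ}
    (hM : ∀ μ ∈ spectrum ℂ M, ‖μ‖ < 1) : spectralRadius ℂ M < 1 := by
  let _ := Matrix.linftyOpNormedRing (n := ι) (α := ℂ)
  let _ := Matrix.linftyOpNormedAlgebra (n := ι) (α := ℂ) (R := ℂ)
  have : CompleteSpace (Matrix ι ι ℂ) := FiniteDimensional.complete ℂ _
  rcases (spectrum ℂ M).eq_empty_or_nonempty with h | h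
  · simp [spectralRadius, h]
  · exact_mod_cast spectrum.spectralRadius_lt_of_forall_lt_of_nonempty h (r := 1)
      fun μ hμ => by exact_mod_cast hM μ hμ

theorem tendsto_pow_atTop_nhds_zero_of_spectralRadius_lt_one {M : Matrix ι ι ℂ}
    (hM : spectralRadius ℂ M < 1) : Tendsto (M ^ ·) atTop (𝓝 0) :=
  letI := Matrix.linftyOpNormedRing (n := ι) (α := ℂ)
  letI := Matrix.linftyOpNormedAlgebra (n := ι) (α := ℂ) (R := ℂ)
  haveI : CompleteSpace (Matrix ι ι ℂ) := FiniteDimensional.complete ℂ _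
  _root_.tendsto_pow_atTop_nhds_zero_of_spectralRadius_lt_one hM

theorem tendsto_pow_atTop_nhds_zero_of_spectralRadius_map_ofReal_lt_one {M : Matrix ι ι ℝ}
    (hM : spectralRadius ℂ (M.map Complex.ofReal) < 1) : Tendsto (M ^ ·) atTop (𝓝 0) := by
  have hpow : ∀ n : ℕ, M ^ n = ((M.map Complex.ofReal) ^ n).map Complex.re := fun n => by
    change M ^ n = (Complex.ofRealHom.mapMatrix M ^ n).map Complex.re
    rw [← map_pow]
    ext; simp
  simpa [Function.comp_def, ← hpow] using
    ((continuous_id.matrix_map Complex.continuous_re).tendsto 0).comp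
      (tendsto_pow_atTop_nhds_zero_of_spectralRadius_lt_one hM)

end Spectrum

theorem tendsto_of_mulVec_add {ι R : Type*} [Fintype ι] [DecidableEq ι] [Ring R]
    [TopologicalSpace R] [IsTopologicalRing R] {B : Matrix ι ι R} {c u : ι → R} {U : ℕ → ι → R}
    (hB : Tendsto (B ^ ·) atTop (𝓝 0)) (hfix : B *ᵥ u + c = u)
    (hU : ∀ m, U (m + 1) = B *ᵥ U m + c) : Tendsto U atTop (𝓝 u) := by
  have herr : ∀ m, U m = (B ^ m) *ᵥ (U 0 - u) + u := by
    intro m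
    induction m with
    | zero => simp
    | succ m ih => rw [hU m, ih, mulVec_add, mulVec_mulVec, ← pow_succ', add_assoc, hfix]
  have h0 : Tendsto (fun m => (B ^ m) *ᵥ (U 0 - u)) atTop (𝓝 0) := by
    simpa [Function.comp_def] using
      ((continuous_id.matrix_mulVec continuous_const).tendsto (0 : Matrix ι ι R)).comp hB
  simpa [← herr] using h0.add_const u

section Jacobi

variable {ι K : Type*} [Fintype ι] [DecidableEq ι]

def jacobiMatrix [Field K] (A : Matrix ι ι K) : Matrix ι ι K :=
  1 - diagonal (fun i => (A i i)⁻¹) * A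

theorem jacobiMatrix_apply [Field K] (A : Matrix ι ι K) (i j : ι) :
    jacobiMatrix A i j = (1 : Matrix ι ι K) i j - (A i i)⁻¹ * A i j := by
  simp [jacobiMatrix, diagonal_mul]

theorem jacobiMatrix_apply_self [Field K] {A : Matrix ι ι K} {i : ι} (h : A i i ≠ 0) :
    jacobiMatrix A i i = 0 := by
  simp [jacobiMatrix_apply, h]

theorem jacobiMatrix_apply_of_ne [Field K] (A : Matrix ι ι K) {i j : ι} (h : i ≠ j) :
    jacobiMatrix A i j = -((A i i)⁻¹ * A i j) := by
  simp [jacobiMatrix_apply, h]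

theorem jacobiMatrix_mulVec_add_of_mulVec_eq [Field K] {A : Matrix ι ι K} {u b : ι → K}
    (h : A *ᵥ u = b) : jacobiMatrix A *ᵥ u + diagonal (fun i => (A i i)⁻¹) *ᵥ b = u := by
  rw [jacobiMatrix, sub_mulVec, one_mulVec, ← mulVec_mulVec, h, sub_add_cancel]

theorem reflTransGen_jacobiMatrix_ne_zero [Field K] {A : Matrix ι ι K} (hdiag : ∀ i, A i i ≠ 0)
    {i j : ι} (h : ReflTransGen (fun i j => A i j ≠ 0) i j) :
    ReflTransGen (fun i j => jacobiMatrix A i j ≠ 0) i j := by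
  induction h with
  | refl => exact .refl
  | @tail k l _ hkl ih =>
    rcases eq_or_ne k l with rfl | hne
    · exact ih
    · refine ih.tail ?_
      rw [jacobiMatrix_apply_of_ne A hne, neg_ne_zero]
      exact mul_ne_zero (inv_ne_zero (hdiag k)) hkl

variable [NormedField K] {A : Matrix ι ι K}

theorem sum_norm_jacobiMatrix {i : ι} (h : A i i ≠ 0) :
    ∑ j, ‖jacobiMatrix A i j‖ = (∑ j ∈ univ.erase i, ‖A i j‖) / ‖A i i‖ := by
  rw [← add_sum_erase _ _ (mem_univ i), jacobiMatrix_apply_self h, norm_zero, zero_add, sum_div]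
  refine sum_congr rfl fun j hj => ?_
  rw [jacobiMatrix_apply_of_ne A (ne_of_mem_erase hj).symm, norm_neg, norm_mul, norm_inv,
    inv_mul_eq_div]

theorem sum_norm_jacobiMatrix_le_one {i : ι} (h : A i i ≠ 0)
    (hrow : ∑ j ∈ univ.erase i, ‖A i j‖ ≤ ‖A i i‖) : ∑ j, ‖jacobiMatrix A i j‖ ≤ 1 := by
  rwa [sum_norm_jacobiMatrix h, div_le_one (norm_pos_iff.2 h)]

theorem sum_norm_jacobiMatrix_lt_one {i : ι} (h : A i i ≠ 0)
    (hrow : ∑ j ∈ univ.erase i, ‖A i j‖ < ‖A i i‖) : ∑ j, ‖jacobiMatrix A i j‖ < 1 := by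
  rwa [sum_norm_jacobiMatrix h, div_lt_one (norm_pos_iff.2 h)]

theorem isUnit_of_jacobiMatrix (hrow : ∀ i, ∑ j, ‖jacobiMatrix A i j‖ ≤ 1)
    (hchain : ∀ i, ∃ k, ReflTransGen (fun i j => jacobiMatrix A i j ≠ 0) i k ∧
      ∑ j, ‖jacobiMatrix A k j‖ < 1) : IsUnit A := by
  rw [isUnit_iff_isUnit_det, isUnit_iff_ne_zero]
  intro hdet
  obtain ⟨v, hv0, hv⟩ := exists_mulVec_eq_zero_iff.2 hdet
  have hfix : jacobiMatrix A *ᵥ v = (1 : K) • v := by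
    simpa using jacobiMatrix_mulVec_add_of_mulVec_eq hv
  simpa using norm_lt_one_of_mulVec_eq_smul hrow hchain hfix hv0

end Jacobi

end Matrix

theorem scarborough_jacobi_convergence_general
    (N : ℕ) (A : Matrix (Fin N) (Fin N) ℝ)
    (hdiag : ∀ i, A i i ≠ 0)
    (hirr : ∀ i j : Fin N, i ≠ j → ∃ r : ℕ, ∃ c : ℕ → Fin N,
      c 0 = i ∧ c r = j ∧ ∀ s < r, A (c s) (c (s + 1)) ≠ 0)
    (hrow : ∀ i, ∑ j ∈ Finset.univ.erase i, |A i j| ≤ |A i i|)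
    (hstrict : ∃ i, ∑ j ∈ Finset.univ.erase i, |A i j| < |A i i|) :
    spectralRadius ℂ
      ((((1 : Matrix (Fin N) (Fin N) ℝ)
          - (Matrix.diagonal fun i => (A i i)⁻¹) * A)).map Complex.ofReal) < 1 ∧
    IsUnit A ∧
    ∀ b : Fin N → ℝ, ∃ Ustar : Fin N → ℝ,
      A.mulVec Ustar = b ∧ (∀ V : Fin N → ℝ, A.mulVec V = b → V = Ustar) ∧
      ∀ U : ℕ → Fin N → ℝ,
        (∀ m : ℕ, U (m + 1) =
            ((1 : Matrix (Fin N) (Fin N) ℝ)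
              - (Matrix.diagonal fun i => (A i i)⁻¹) * A).mulVec (U m)
            + (Matrix.diagonal fun i => (A i i)⁻¹).mulVec b) →
        Filter.Tendsto U Filter.atTop (nhds Ustar) := by
  obtain ⟨k, hk⟩ := hstrict
  have hconn : ∀ i, ReflTransGen (fun i j => A i j ≠ 0) i k := fun i => by
    rcases eq_or_ne i k with rfl | hik
    · exact .refl
    · obtain ⟨r, c, rfl, rfl, hc⟩ := hirr i k hik
      exact reflTransGen_of_chain _ c hc
  have hrowJ : ∀ i, ∑ j, ‖jacobiMatrix A i j‖ ≤ 1 := fun i =>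
    sum_norm_jacobiMatrix_le_one (hdiag i) (by simpa only [Real.norm_eq_abs] using hrow i)
  have hchainJ : ∀ i, ∃ k, ReflTransGen (fun i j => jacobiMatrix A i j ≠ 0) i k ∧
      ∑ j, ‖jacobiMatrix A k j‖ < 1 := fun i =>
    ⟨k, reflTransGen_jacobiMatrix_ne_zero hdiag (hconn i),
      sum_norm_jacobiMatrix_lt_one (hdiag k) (by simpa only [Real.norm_eq_abs] using hk)⟩
  have hρ : spectralRadius ℂ ((jacobiMatrix A).map Complex.ofReal) < 1 :=
    spectralRadius_lt_one_of_forall_norm_lt_one fun μ hμ => by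
      obtain ⟨x, hx0, hx⟩ := exists_mulVec_eq_smul_of_mem_spectrum hμ
      exact norm_lt_one_of_mulVec_eq_smul (by simpa using hrowJ) (by simpa using hchainJ) hx hx0
  have hA : IsUnit A := isUnit_of_jacobiMatrix hrowJ hchainJ
  refine ⟨hρ, hA, fun b => ?_⟩
  obtain ⟨u, hu⟩ := mulVec_surjective_iff_isUnit.2 hA b
  exact ⟨u, hu, fun v hv => mulVec_injective_iff_isUnit.2 hA (hv.trans hu.symm),
    fun U hU => tendsto_of_mulVec_add
      (tendsto_pow_atTop_nhds_zero_of_spectralRadius_map_ofReal_lt_one hρ)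
      (jacobiMatrix_mulVec_add_of_mulVec_eq hu) hU⟩

/-- **Scarborough criterion.** If `A` is an irreducible real `N × N` matrix with nonzero
diagonal, weakly diagonally dominant in every row and strictly diagonally dominant in at
least one row, then the spectral radius of the Jacobi iteration matrix `I - D⁻¹A` is
strictly less than 1, `A` is invertible, and for every right-hand side `b` and every
initial vector the Jacobi iterates converge to the unique solution of `A U = b`. -/
theorem scarborough_jacobi_convergence
    (N : ℕ) (hN : 1 ≤ N) (A : Matrix (Fin N) (Fin N) ℝ)
    (hdiag : ∀ i, A i i ≠ 0)
    (hirr : ∀ i j : Fin N, i ≠ j → ∃ r : ℕ, ∃ c : ℕ → Fin N,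
      c 0 = i ∧ c r = j ∧ ∀ s < r, A (c s) (c (s + 1)) ≠ 0)
    (hrow : ∀ i, ∑ j ∈ Finset.univ.erase i, |A i j| ≤ |A i i|)
    (hstrict : ∃ i, ∑ j ∈ Finset.univ.erase i, |A i j| < |A i i|) :
    spectralRadius ℂ
      ((((1 : Matrix (Fin N) (Fin N) ℝ)
          - (Matrix.diagonal fun i => (A i i)⁻¹) * A)).map Complex.ofReal) < 1 ∧
    IsUnit A ∧
    ∀ b : Fin N → ℝ, ∃ Ustar : Fin N → ℝ,
      A.mulVec Ustar = b ∧ (∀ V : Fin N → ℝ, A.mulVec V = b → V = Ustar) ∧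
      ∀ U : ℕ → Fin N → ℝ,
        (∀ m : ℕ, U (m + 1) =
            ((1 : Matrix (Fin N) (Fin N) ℝ)
              - (Matrix.diagonal fun i => (A i i)⁻¹) * A).mulVec (U m)
            + (Matrix.diagonal fun i => (A i i)⁻¹).mulVec b) →
        Filter.Tendsto U Filter.atTop (nhds Ustar) :=
  scarborough_jacobi_convergence_general N A hdiag hirr hrow hstrict
end

section
/- Let ε_k, η_k, γ_k ∈ ℝ (k = 1,2) satisfy |η_k| ≤ ε_k and γ_k ≥ 0, and let κ ∈ ℝ satisfy κ ≥ 2ε_k + γ_k for k = 1,2. Then for each k, |ε_k+η_k| + |κ−(2ε_k+γ_k)| + |ε_k−η_k| = κ − γ_k, and consequently max_{k=1,2} (|ε_k+η_k| + |κ−(2ε_k+γ_k)| + |ε_k−η_k|)/(1+κ) = max_{k=1,2} (κ−γ_k)/(1+κ) < 1; in particular the sufficient convergence condition for the artificial compressibility Schwarz iteration is automatically satisfied. -/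
theorem abs_add_add_abs_sub_add_abs_sub_eq {ε η γ κ : ℝ} (hη : |η| ≤ ε) (hκ : 2 * ε + γ ≤ κ) :
    |ε + η| + |κ - (2 * ε + γ)| + |ε - η| = κ - γ := by
  obtain ⟨hη_lower, hη_upper⟩ := abs_le.mp hη
  rw [abs_of_nonneg (by linarith), abs_of_nonneg (by linarith), abs_of_nonneg (by linarith)]
  ring

theorem sub_div_one_add_lt_one {γ κ : ℝ} (hγ : -1 < γ) (hκ : -1 < κ) :
    (κ - γ) / (1 + κ) < 1 :=
  (div_lt_one (by linarith)).mpr (by linarith)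

/-- When `|η_k| ≤ ε_k`, `γ_k ≥ 0` and `κ ≥ 2ε_k + γ_k` for `k = 1,2`, the row sums of the
artificial compressibility Schwarz iteration matrix simplify to `κ - γ_k`, and the
sufficient convergence condition is automatically satisfied. -/
theorem artificial_compressibility_condition_automatic
    (ε₁ ε₂ η₁ η₂ γ₁ γ₂ κ : ℝ)
    (hη₁ : |η₁| ≤ ε₁) (hη₂ : |η₂| ≤ ε₂) (hγ₁ : 0 ≤ γ₁) (hγ₂ : 0 ≤ γ₂)
    (hκ₁ : 2 * ε₁ + γ₁ ≤ κ) (hκ₂ : 2 * ε₂ + γ₂ ≤ κ) :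
    (|ε₁ + η₁| + |κ - (2 * ε₁ + γ₁)| + |ε₁ - η₁| = κ - γ₁) ∧
    (|ε₂ + η₂| + |κ - (2 * ε₂ + γ₂)| + |ε₂ - η₂| = κ - γ₂) ∧
    max ((|ε₁ + η₁| + |κ - (2 * ε₁ + γ₁)| + |ε₁ - η₁|) / (1 + κ))
        ((|ε₂ + η₂| + |κ - (2 * ε₂ + γ₂)| + |ε₂ - η₂|) / (1 + κ))
      = max ((κ - γ₁) / (1 + κ)) ((κ - γ₂) / (1 + κ)) ∧
    max ((κ - γ₁) / (1 + κ)) ((κ - γ₂) / (1 + κ)) < 1 := by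
  have row₁ := abs_add_add_abs_sub_add_abs_sub_eq hη₁ hκ₁
  have row₂ := abs_add_add_abs_sub_add_abs_sub_eq hη₂ hκ₂
  have hκ : -1 < κ := by linarith [(abs_nonneg η₁).trans hη₁]
  refine ⟨row₁, row₂, by rw [row₁, row₂], max_lt ?_ ?_⟩
  · exact sub_div_one_add_lt_one (by linarith) hκ
  · exact sub_div_one_add_lt_one (by linarith) hκ
end

section
/- Let I, J ≥ 3 and ε_k, η_k, γ_k ∈ ℝ with s_k := 1+2ε_k+γ_k (k = 1,2). Define R₁(2) = s₁ and R₁(i) = s₁ + (η₁²−ε₁²)/R₁(i−1) for 3 ≤ i ≤ I−1, and R₂(J−1) = s₂ and R₂(j) = s₂ + (η₂²−ε₂²)/R₂(j+1) for 2 ≤ j ≤ J−2; assume R₁(i) ≠ 0 for 2 ≤ i ≤ I−1 and R₂(j) ≠ 0 for 2 ≤ j ≤ J−1. Suppose the error sequences e₁^m ∈ ℝ^I, e₂^m ∈ ℝ^J satisfy, for every m ≥ 1: e₁^m_1 = 0 and e₂^m_J = 0; −(η₁+ε₁)e₁^m_{i−1} + s₁ e₁^m_i + (η₁−ε₁)e₁^m_{i+1}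 = 0 for 2 ≤ i ≤ I−1; −(η₂+ε₂)e₂^m_{j−1} + s₂ e₂^m_j + (η₂−ε₂)e₂^m_{j+1} = 0 for 2 ≤ j ≤ J−1; and the classic (Dirichlet) interface conditions e₁^m_I = e₂^{m−1}_2 and e₂^m_1 = e₁^{m−1}_{I−1}. Then, with ρ̄ := −(η₁−ε₁)(η₂+ε₂)/(R₁(I−1)·R₂(2)), for every m ≥ 1 one has e₁^{m+2}_i = ρ̄·e₁^m_i for all 1 ≤ i ≤ I and e₂^{m+2}_j = ρ̄·e₂^m_j for all 1 ≤ j ≤ J; i.e., ρ̄ is the contraction factor of the Schwarz iteration. -/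
/-!
On each subdomain the error solves a tridiagonal system with a homogeneous Dirichlet condition
at the outer end. Gaussian elimination started from that end (the Thomas algorithm, whose pivots
are the `R₁ i`, resp. `R₂ j`) shows that every component is a fixed multiple of its neighbour
towards the interface: `e₁ i = -(η₁ - ε₁) / R₁ i * e₁ (i + 1)` and
`e₂ j = (η₂ + ε₂) / R₂ j * e₂ (j - 1)`. So an iterate is a fixed vector scaled by its interface
value, and following the interface values through two Schwarz steps multiplies them by `ρ̄`.
-/

theorem eq_const_mul_of_desc_recurrence {u v c : ℕ → ℝ} {ρ : ℝ} {a b : ℕ}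
    (hu : ∀ i, a ≤ i → i < b → u i = c i * u (i + 1))
    (hv : ∀ i, a ≤ i → i < b → v i = c i * v (i + 1))
    (hb : u b = ρ * v b) :
    ∀ i, a ≤ i → i ≤ b → u i = ρ * v i := by
  intro i hai hib
  induction hib using Nat.decreasingInduction with
  | self => exact hb
  | of_succ k hkb ih =>
    rw [hu k hai hkb, hv k hai hkb, ih (by omega)]
    ring

theorem eq_const_mul_of_asc_recurrence {u v c : ℕ → ℝ} {ρ : ℝ} {a b : ℕ}
    (hu : ∀ i, a ≤ i → i < b → u (i + 1) = c i * u i)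
    (hv : ∀ i, a ≤ i → i < b → v (i + 1) = c i * v i)
    (ha : u a = ρ * v a) :
    ∀ i, a ≤ i → i ≤ b → u i = ρ * v i := by
  intro i hai
  induction i, hai using Nat.le_induction with
  | base => exact fun _ => ha
  | succ k hak ih =>
    intro hkb
    rw [hu k hak hkb, hv k hak hkb, ih (by omega)]
    ring

theorem forward_elimination {s p q : ℝ} {R e : ℕ → ℝ} {n : ℕ}
    (hR₂ : R 2 = s) (hR : ∀ i, 3 ≤ i → i ≤ n → R i = s + p * q / R (i - 1))
    (hR₀ : ∀ i, 2 ≤ i → i ≤ n → R i ≠ 0) (he₁ : e 1 = 0)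
    (he : ∀ i, 2 ≤ i → i ≤ n → -p * e (i - 1) + s * e i + q * e (i + 1) = 0) :
    ∀ i, 2 ≤ i → i ≤ n → e i = -q / R i * e (i + 1) := by
  intro i hi
  induction i, hi using Nat.le_induction with
  | base =>
    intro h2n
    have h := he 2 le_rfl h2n
    rw [show 2 - 1 = 1 from rfl, he₁] at h
    rw [div_mul_eq_mul_div, eq_div_iff (hR₀ 2 le_rfl h2n), hR₂]
    linear_combination h
  | succ i hi ih =>
    intro hin
    have h := he (i + 1) (by omega) hin
    rw [Nat.add_sub_cancel, ih (by omega)] at h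
    rw [div_mul_eq_mul_div, eq_div_iff (hR₀ (i + 1) (by omega) hin),
      hR (i + 1) (by omega) hin, Nat.add_sub_cancel]
    linear_combination h

/-- The sweep from the right end is the forward sweep on the grid reflected by `j ↦ J + 1 - j`,
which swaps the roles of `-p` and `q`. -/
theorem backward_elimination {s p q : ℝ} {R e : ℕ → ℝ} {J : ℕ}
    (hR₁ : R (J - 1) = s) (hR : ∀ j, 2 ≤ j → j ≤ J - 2 → R j = s + p * q / R (j + 1))
    (hR₀ : ∀ j, 2 ≤ j → j ≤ J - 1 → R j ≠ 0) (heJ : e J = 0)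
    (he : ∀ j, 2 ≤ j → j ≤ J - 1 → -p * e (j - 1) + s * e j + q * e (j + 1) = 0) :
    ∀ j, 2 ≤ j → j ≤ J - 1 → e j = p / R j * e (j - 1) := by
  intro j hj2 hjJ
  have key := forward_elimination (s := s) (p := -q) (q := -p) (n := J - 1)
    (R := fun k => R (J + 1 - k)) (e := fun k => e (J + 1 - k)) ?_ ?_ ?_ ?_ ?_
    (J + 1 - j) (by omega) (by omega)
  · rw [show J + 1 - (J + 1 - j) = j by omega,
      show J + 1 - (J + 1 - j + 1) = j - 1 by omega, neg_neg] at key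
    exact key
  · show R (J + 1 - 2) = s
    rwa [show J + 1 - 2 = J - 1 by omega]
  · intro k hk3 hkJ
    show R (J + 1 - k) = s + -q * -p / R (J + 1 - (k - 1))
    rw [hR (J + 1 - k) (by omega) (by omega), show J + 1 - (k - 1) = J + 1 - k + 1 by omega]
    ring
  · exact fun k hk2 hkJ => hR₀ _ (by omega) (by omega)
  · show e (J + 1 - 1) = 0
    rwa [Nat.add_sub_cancel]
  · intro k hk2 hkJ
    have h := he (J + 1 - k) (by omega) (by omega)
    rw [show J + 1 - k - 1 = J + 1 - (k + 1) by omega,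
      show J + 1 - k + 1 = J + 1 - (k - 1) by omega] at h
    show -(-q) * e (J + 1 - (k - 1)) + s * e (J + 1 - k) + -p * e (J + 1 - (k + 1)) = 0
    linear_combination h
/-- Contraction factor of the implicit Schwarz iteration with classic (Dirichlet)
interface conditions for two coupled linear advection–diffusion–reaction equations:
with `ρ̄ = -(η₁-ε₁)(η₂+ε₂)/(R₁(I-1)·R₂(2))`, every error component is multiplied by `ρ̄`
after two Schwarz iterations. -/
theorem implicit_schwarz_contraction_classic
    (I J : ℕ) (hI : 3 ≤ I) (hJ : 3 ≤ J)
    (ε₁ ε₂ η₁ η₂ γ₁ γ₂ : ℝ)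
    (R₁ R₂ : ℕ → ℝ)
    (hR₁base : R₁ 2 = 1 + 2 * ε₁ + γ₁)
    (hR₁rec : ∀ i : ℕ, 3 ≤ i → i ≤ I - 1 →
      R₁ i = 1 + 2 * ε₁ + γ₁ + (η₁ ^ 2 - ε₁ ^ 2) / R₁ (i - 1))
    (hR₂base : R₂ (J - 1) = 1 + 2 * ε₂ + γ₂)
    (hR₂rec : ∀ j : ℕ, 2 ≤ j → j ≤ J - 2 →
      R₂ j = 1 + 2 * ε₂ + γ₂ + (η₂ ^ 2 - ε₂ ^ 2) / R₂ (j + 1))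
    (hR₁ne : ∀ i : ℕ, 2 ≤ i → i ≤ I - 1 → R₁ i ≠ 0)
    (hR₂ne : ∀ j : ℕ, 2 ≤ j → j ≤ J - 1 → R₂ j ≠ 0)
    (e₁ e₂ : ℕ → ℕ → ℝ)
    (hb₁ : ∀ m : ℕ, 1 ≤ m → e₁ m 1 = 0)
    (hb₂ : ∀ m : ℕ, 1 ≤ m → e₂ m J = 0)
    (heq₁ : ∀ m : ℕ, 1 ≤ m → ∀ i : ℕ, 2 ≤ i → i ≤ I - 1 →
      -(η₁ + ε₁) * e₁ m (i - 1) + (1 + 2 * ε₁ + γ₁) * e₁ m i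
        + (η₁ - ε₁) * e₁ m (i + 1) = 0)
    (heq₂ : ∀ m : ℕ, 1 ≤ m → ∀ j : ℕ, 2 ≤ j → j ≤ J - 1 →
      -(η₂ + ε₂) * e₂ m (j - 1) + (1 + 2 * ε₂ + γ₂) * e₂ m j
        + (η₂ - ε₂) * e₂ m (j + 1) = 0)
    (hint₁ : ∀ m : ℕ, e₁ (m + 1) I = e₂ m 2)
    (hint₂ : ∀ m : ℕ, e₂ (m + 1) 1 = e₁ m (I - 1)) :
    ∀ m : ℕ, 1 ≤ m →
      (∀ i : ℕ, 1 ≤ i → i ≤ I →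
        e₁ (m + 2) i
          = -((η₁ - ε₁) * (η₂ + ε₂)) / (R₁ (I - 1) * R₂ 2) * e₁ m i) ∧
      (∀ j : ℕ, 1 ≤ j → j ≤ J →
        e₂ (m + 2) j
          = -((η₁ - ε₁) * (η₂ + ε₂)) / (R₁ (I - 1) * R₂ 2) * e₂ m j) := by
  intro m hm
  set ρ := -((η₁ - ε₁) * (η₂ + ε₂)) / (R₁ (I - 1) * R₂ 2)
  have sweep₁ : ∀ n, 1 ≤ n → ∀ i, 2 ≤ i → i ≤ I - 1 →
      e₁ n i = -(η₁ - ε₁) / R₁ i * e₁ n (i + 1) := fun n hn =>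
    forward_elimination hR₁base (fun i h3 hi => by rw [hR₁rec i h3 hi]; ring) hR₁ne
      (hb₁ n hn) (heq₁ n hn)
  have sweep₂ : ∀ n, 1 ≤ n → ∀ j, 2 ≤ j → j ≤ J - 1 →
      e₂ n j = (η₂ + ε₂) / R₂ j * e₂ n (j - 1) := fun n hn =>
    backward_elimination hR₂base (fun j h2 hj => by rw [hR₂rec j h2 hj]; ring) hR₂ne
      (hb₂ n hn) (heq₂ n hn)
  have sweep₁_last : ∀ n, 1 ≤ n →
      e₁ n (I - 1) = -(η₁ - ε₁) / R₁ (I - 1) * e₁ n I := fun n hn =>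
    Nat.sub_add_cancel (by omega : 1 ≤ I) ▸ sweep₁ n hn (I - 1) (by omega) le_rfl
  have sweep₂_first : ∀ n, 1 ≤ n → e₂ n 2 = (η₂ + ε₂) / R₂ 2 * e₂ n 1 := fun n hn =>
    sweep₂ n hn 2 le_rfl (by omega)
  have interface₁ : e₁ (m + 2) I = ρ * e₁ m I := by
    rw [hint₁, sweep₂_first _ (by omega), hint₂, sweep₁_last m hm]
    ring
  have interface₂ : e₂ (m + 2) 1 = ρ * e₂ m 1 := by
    rw [hint₂, sweep₁_last _ (by omega), hint₁, sweep₂_first m hm]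
    ring
  refine ⟨fun i hi1 hiI => ?_, fun j hj1 hjJ => ?_⟩
  · obtain rfl | hi2 := hi1.eq_or_lt
    · rw [hb₁ m hm, hb₁ (m + 2) (by omega), mul_zero]
    exact eq_const_mul_of_desc_recurrence (a := 2)
      (fun i h2 hiI => sweep₁ (m + 2) (by omega) i h2 (by omega))
      (fun i h2 hiI => sweep₁ m hm i h2 (by omega)) interface₁ i hi2 hiI
  · obtain rfl | hjJ' := hjJ.eq_or_lt
    · rw [hb₂ m hm, hb₂ (m + 2) (by omega), mul_zero]
    exact eq_const_mul_of_asc_recurrence (b := J - 1)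
      (fun j h1 hjJ => sweep₂ (m + 2) (by omega) (j + 1) (by omega) (by omega))
      (fun j h1 hjJ => sweep₂ m hm (j + 1) (by omega) (by omega)) interface₂ j hj1 (by omega)
end

section
/- Let P, S, p, q ∈ ℝ with p ≠ 0, q ≠ 0 and PS + pq ≠ 0, and define ρ̄(α,β) = −[((α+1)q − S)·((β−1)p − P)] / [((α+1)P + p)·((β−1)S + q)]. Set α* = S/q − 1 and β* = P/p + 1. Then (α*+1)P + p = (PS+pq)/q ≠ 0 and (β*−1)S + q = (PS+pq)/p ≠ 0, and ρ̄(α*,β*) = 0; moreover both partial derivatives ∂ρ̄/∂α and ∂ρ̄/∂β vanish at (α*,β*). -/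
/-- Contraction factor of the implicit Schwarz iteration with optimized interface
parameters `α, β`, with abstract parameters `P = R₁(I-1)`, `S = R₂(2)`, `p = η₁-ε₁`,
`q = η₂+ε₂`. -/
noncomputable def rhoBar (P S p q α β : ℝ) : ℝ :=
  -(((α + 1) * q - S) * ((β - 1) * p - P)) /
    (((α + 1) * P + p) * ((β - 1) * S + q))

/-! The numerator of `rhoBar` is a product of a factor depending only on `α` and one depending
only on `β`. The optimal parameters are the roots of these factors, so `rhoBar` vanishes
identically along both coordinate lines through `(α*, β*)`; in particular both partial
derivatives vanish there. -/

namespace rhoBar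

variable {P S p q : ℝ}

theorem eq_zero_of_left_factor {α : ℝ} (hα : (α + 1) * q = S) (β : ℝ) :
    rhoBar P S p q α β = 0 := by
  simp [rhoBar, hα]

theorem eq_zero_of_right_factor {β : ℝ} (hβ : (β - 1) * p = P) (α : ℝ) :
    rhoBar P S p q α β = 0 := by
  simp [rhoBar, hβ]

theorem deriv_left_eq_zero {β : ℝ} (hβ : (β - 1) * p = P) (α : ℝ) :
    deriv (fun a => rhoBar P S p q a β) α = 0 := by
  simp [eq_zero_of_right_factor hβ]

theorem deriv_right_eq_zero {α : ℝ} (hα : (α + 1) * q = S) (β : ℝ) :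
    deriv (fun b => rhoBar P S p q α b) β = 0 := by
  simp [eq_zero_of_left_factor hα]

theorem optimal_left_factor (hq : q ≠ 0) : (S / q - 1 + 1) * q = S := by
  field_simp; ring

theorem optimal_right_factor (hp : p ≠ 0) : (P / p + 1 - 1) * p = P := by
  field_simp; ring

theorem optimal_left_denom (hq : q ≠ 0) :
    (S / q - 1 + 1) * P + p = (P * S + p * q) / q := by
  field_simp; ring

theorem optimal_right_denom (hp : p ≠ 0) :
    (P / p + 1 - 1) * S + q = (P * S + p * q) / p := by
  field_simp; ring

end rhoBar

/-- At the optimal interface parameters `α* = S/q - 1`, `β* = P/p + 1`, the denominators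
of the contraction factor are nonzero, the contraction factor vanishes, and both of its
first partial derivatives vanish. -/
theorem rhoBar_optimal_zero_and_critical
    (P S p q : ℝ) (hp : p ≠ 0) (hq : q ≠ 0) (h : P * S + p * q ≠ 0) :
    (S / q - 1 + 1) * P + p = (P * S + p * q) / q ∧
    (S / q - 1 + 1) * P + p ≠ 0 ∧
    (P / p + 1 - 1) * S + q = (P * S + p * q) / p ∧
    (P / p + 1 - 1) * S + q ≠ 0 ∧
    rhoBar P S p q (S / q - 1) (P / p + 1) = 0 ∧
    deriv (fun a => rhoBar P S p q a (P / p + 1)) (S / q - 1) = 0 ∧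
    deriv (fun b => rhoBar P S p q (S / q - 1) b) (P / p + 1) = 0 :=
  ⟨rhoBar.optimal_left_denom hq, rhoBar.optimal_left_denom hq ▸ div_ne_zero h hq,
    rhoBar.optimal_right_denom hp, rhoBar.optimal_right_denom hp ▸ div_ne_zero h hp,
    rhoBar.eq_zero_of_left_factor (rhoBar.optimal_left_factor hq) _,
    rhoBar.deriv_left_eq_zero (rhoBar.optimal_right_factor hp) _,
    rhoBar.deriv_right_eq_zero (rhoBar.optimal_left_factor hq) _⟩
end

section
/- Let P, S, p, q ∈ ℝ with p ≠ 0, q ≠ 0 and PS + pq ≠ 0, and define ρ̄(α,β) = −[((α+1)q − S)·((β−1)p − P)] / [((α+1)P + p)·((β−1)S + q)]. Set α* = S/q − 1 and β* = P/p + 1. Then at the point (α*,β*): the second partial derivative of ρ̄ with respect to α is 0, the second partial derivative of ρ̄ with respect to β is 0, and the mixed second partial derivative ∂²ρ̄/∂α∂β equals −p²q²/(PS+pq)², which is nonzero; consequently the second-derivative-test discriminant (∂²ρ̄/∂α²)(∂²ρ̄/∂β²) − (∂²ρ̄/∂α∂β)² is strictly negative at (α*,β*). -/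
section General

variable {𝕜 : Type*} [NontriviallyNormedField 𝕜]

theorem HasDerivAt.div_of_left_eq_zero {u v : 𝕜 → 𝕜} {u' v' x : 𝕜}
    (hu : HasDerivAt u u' x) (hv : HasDerivAt v v' x) (hvx : v x ≠ 0) (hux : u x = 0) :
    HasDerivAt (fun y => u y / v y) (u' / v x) x :=
  (hu.div hv hvx).congr_deriv (by rw [hux, zero_mul, sub_zero, sq, mul_div_mul_right _ _ hvx])

theorem deriv_deriv_mul_separable (f g : 𝕜 → 𝕜) (a₀ b₀ : 𝕜) :
    deriv (fun b => deriv (fun a => f a * g b) a₀) b₀ = deriv f a₀ * deriv g b₀ := by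
  simp only [deriv_mul_const_field]
  exact deriv_const_mul_field _

end General

section RhoBar

variable {P S p q : ℝ}

theorem rhoBar_eq_mul (P S p q α β : ℝ) :
    rhoBar P S p q α β =
      ((α + 1) * q - S) / ((α + 1) * P + p) * (-((β - 1) * p - P) / ((β - 1) * S + q)) := by
  rw [rhoBar, neg_div, neg_div, mul_neg, div_mul_div_comm]

theorem rhoBar_eq_zero_at_alpha_opt (hq : q ≠ 0) (β : ℝ) : rhoBar P S p q (S / q - 1) β = 0 := by
  simp [rhoBar, div_mul_cancel₀ S hq]

theorem rhoBar_eq_zero_at_beta_opt (hp : p ≠ 0) (α : ℝ) : rhoBar P S p q α (P / p + 1) = 0 := by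
  simp [rhoBar, div_mul_cancel₀ P hp]

theorem hasDerivAt_alpha_factor_at_opt (hq : q ≠ 0) (h : P * S + p * q ≠ 0) :
    HasDerivAt (fun α => ((α + 1) * q - S) / ((α + 1) * P + p))
      (q ^ 2 / (P * S + p * q)) (S / q - 1) := by
  have hden : (S / q - 1 + 1) * P + p = (P * S + p * q) / q := by field_simp; ring
  have hderiv := HasDerivAt.div_of_left_eq_zero (u := fun α => (α + 1) * q - S)
    (v := fun α => (α + 1) * P + p)
    ((((hasDerivAt_id _).add_const 1).mul_const q).sub_const S)
    ((((hasDerivAt_id _).add_const 1).mul_const P).add_const p)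
    (by rw [hden]; exact div_ne_zero h hq) (by field_simp; ring)
  refine hderiv.congr_deriv ?_
  rw [hden]
  field_simp

theorem hasDerivAt_beta_factor_at_opt (hp : p ≠ 0) (h : P * S + p * q ≠ 0) :
    HasDerivAt (fun β => -((β - 1) * p - P) / ((β - 1) * S + q))
      (-p ^ 2 / (P * S + p * q)) (P / p + 1) := by
  have hden : (P / p + 1 - 1) * S + q = (P * S + p * q) / p := by field_simp; ring
  have hderiv := HasDerivAt.div_of_left_eq_zero (u := fun β => -((β - 1) * p - P))
    (v := fun β => (β - 1) * S + q)
    ((((hasDerivAt_id _).sub_const 1).mul_const p).sub_const P).neg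
    ((((hasDerivAt_id _).sub_const 1).mul_const S).add_const q)
    (by rw [hden]; exact div_ne_zero h hp) (by field_simp; ring)
  refine hderiv.congr_deriv ?_
  rw [hden]
  field_simp

end RhoBar

/-- At the optimal interface parameters `α* = S/q - 1`, `β* = P/p + 1`, the pure second
partial derivatives of the contraction factor vanish, the mixed second partial derivative
equals `-p²q²/(PS+pq)² ≠ 0`, and hence the second-derivative-test discriminant is
strictly negative. -/
theorem rhoBar_second_derivatives_at_optimum
    (P S p q : ℝ) (hp : p ≠ 0) (hq : q ≠ 0) (h : P * S + p * q ≠ 0) :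
    deriv (fun a => deriv (fun a' => rhoBar P S p q a' (P / p + 1)) a) (S / q - 1) = 0 ∧
    deriv (fun b => deriv (fun b' => rhoBar P S p q (S / q - 1) b') b) (P / p + 1) = 0 ∧
    deriv (fun b => deriv (fun a => rhoBar P S p q a b) (S / q - 1)) (P / p + 1)
      = -(p ^ 2 * q ^ 2) / (P * S + p * q) ^ 2 ∧
    -(p ^ 2 * q ^ 2) / (P * S + p * q) ^ 2 ≠ 0 ∧
    deriv (fun a => deriv (fun a' => rhoBar P S p q a' (P / p + 1)) a) (S / q - 1)
        * deriv (fun b => deriv (fun b' => rhoBar P S p q (S / q - 1) b') b) (P / p + 1)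
      - (deriv (fun b => deriv (fun a => rhoBar P S p q a b) (S / q - 1)) (P / p + 1)) ^ 2
      < 0 := by
  have hαα : deriv (fun a => deriv (fun a' => rhoBar P S p q a' (P / p + 1)) a) (S / q - 1)
      = 0 := by
    simp [rhoBar_eq_zero_at_beta_opt hp]
  have hββ : deriv (fun b => deriv (fun b' => rhoBar P S p q (S / q - 1) b') b) (P / p + 1)
      = 0 := by
    simp [rhoBar_eq_zero_at_alpha_opt hq]
  have hαβ : deriv (fun b => deriv (fun a => rhoBar P S p q a b) (S / q - 1)) (P / p + 1)
      = -(p ^ 2 * q ^ 2) / (P * S + p * q) ^ 2 := by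
    simp only [rhoBar_eq_mul]
    rw [deriv_deriv_mul_separable, (hasDerivAt_alpha_factor_at_opt hq h).deriv,
      (hasDerivAt_beta_factor_at_opt hp h).deriv, div_mul_div_comm]
    ring
  have hne : -(p ^ 2 * q ^ 2) / (P * S + p * q) ^ 2 ≠ 0 := by
    have : p ^ 2 * q ^ 2 ≠ 0 := by positivity
    exact div_ne_zero (neg_ne_zero.mpr this) (pow_ne_zero 2 h)
  refine ⟨hαα, hββ, hαβ, hne, ?_⟩
  rw [hαα, hββ, hαβ, mul_zero, zero_sub, neg_lt_zero]
  positivity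
end

section
/- Let P, S, p, q ∈ ℝ with p ≠ 0, q ≠ 0 and PS + pq ≠ 0, and define ρ̄(α,β) = −[((α+1)q − S)·((β−1)p − P)] / [((α+1)P + p)·((β−1)S + q)]. Set α* = S/q − 1 and β* = P/p + 1. Then (α*,β*) is a saddle point of ρ̄: the function ρ̄ attains neither a local minimum nor a local maximum at (α*,β*); equivalently, every neighborhood of (α*,β*) contains points where ρ̄ > ρ̄(α*,β*) = 0 and points where ρ̄ < 0. -/
/-!
Shifting to `(α, β) = (α* + t, β* + s)` and writing `K = PS + pq` factors the contraction
factor as `ρ̄ = -t s · (pq)² / ((K + Pq t)(K + Sp s))`. The second factor is continuous and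
positive near the origin, so `ρ̄` behaves like `-t s` there: negative along the diagonal
`s = t` and positive along the antidiagonal `s = -t`.
-/

open Filter Topology

lemma not_isLocalMax_sq_mul {c : ℝ → ℝ} (hc : ContinuousAt c 0) (hc0 : 0 < c 0) :
    ¬ IsLocalMax (fun t => t ^ 2 * c t) 0 := by
  intro hmax
  have hpos : ∀ᶠ t in 𝓝[≠] (0 : ℝ), 0 < c t :=
    nhdsWithin_le_nhds (hc.eventually (lt_mem_nhds hc0))
  have hle : ∀ᶠ t in 𝓝[≠] (0 : ℝ), t ^ 2 * c t ≤ 0 :=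
    (hmax.filter_mono nhdsWithin_le_nhds).mono fun t ht => by simpa using ht
  obtain ⟨t, hct, hval, ht⟩ := (hpos.and (hle.and self_mem_nhdsWithin)).exists
  exact (mul_pos (sq_pos_of_ne_zero ht) hct).not_ge hval

lemma not_isLocalMax_sq_mul_sq_div {m K a b : ℝ} (hm : m ≠ 0) (hK : K ≠ 0) :
    ¬ IsLocalMax (fun t => t ^ 2 * (m ^ 2 / ((K + a * t) * (K + b * t)))) 0 := by
  refine not_isLocalMax_sq_mul ?_ ?_
  · exact continuousAt_const.div (by fun_prop) (by simpa using hK)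
  · simpa only [mul_zero, add_zero] using div_pos (sq_pos_of_ne_zero hm) (mul_self_pos.2 hK)

lemma rhoBar_shift (P S p q t s : ℝ) (hp : p ≠ 0) (hq : q ≠ 0) :
    rhoBar P S p q (S / q - 1 + t) (P / p + 1 + s) =
      -(t * s) * ((p * q) ^ 2 /
        ((P * S + p * q + P * q * t) * (P * S + p * q + S * p * s))) := by
  have hα : (S / q - 1 + t + 1) * q - S = t * q := by field_simp; ring
  have hβ : (P / p + 1 + s - 1) * p - P = s * p := by field_simp; ring
  have hA : (S / q - 1 + t + 1) * P + p = (P * S + p * q + P * q * t) / q := by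
    field_simp; ring
  have hB : (P / p + 1 + s - 1) * S + q = (P * S + p * q + S * p * s) / p := by
    field_simp; ring
  rw [rhoBar, hα, hβ, hA, hB, div_mul_div_comm, div_div_eq_mul_div]
  ring

/-- The optimal point `(α*, β*) = (S/q - 1, P/p + 1)` is a saddle point of the
contraction factor: `ρ̄(α*,β*) = 0` and `ρ̄` attains neither a local minimum nor a local
maximum there. -/
theorem rhoBar_optimal_is_saddle
    (P S p q : ℝ) (hp : p ≠ 0) (hq : q ≠ 0) (h : P * S + p * q ≠ 0) :
    rhoBar P S p q (S / q - 1) (P / p + 1) = 0 ∧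
    ¬ IsLocalMin (fun z : ℝ × ℝ => rhoBar P S p q z.1 z.2) (S / q - 1, P / p + 1) ∧
    ¬ IsLocalMax (fun z : ℝ × ℝ => rhoBar P S p q z.1 z.2) (S / q - 1, P / p + 1) := by
  have hpq : p * q ≠ 0 := mul_ne_zero hp hq
  refine ⟨by simpa using rhoBar_shift P S p q 0 0 hp hq, fun hmin => ?_, fun hmax => ?_⟩
  · have hdiag : IsLocalMin (fun t => rhoBar P S p q (S / q - 1 + t) (P / p + 1 + t)) 0 :=
      IsLocalMin.comp_continuous (f := fun z : ℝ × ℝ => rhoBar P S p q z.1 z.2) (b := 0)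
        (g := fun t : ℝ => (S / q - 1 + t, P / p + 1 + t))
        (by simpa using hmin) (by fun_prop)
    refine not_isLocalMax_sq_mul_sq_div (a := P * q) (b := S * p) hpq h ?_
    simpa [rhoBar_shift P S p q _ _ hp hq, sq] using hdiag.neg
  · have hanti : IsLocalMax (fun t => rhoBar P S p q (S / q - 1 + t) (P / p + 1 + -t)) 0 :=
      IsLocalMax.comp_continuous (f := fun z : ℝ × ℝ => rhoBar P S p q z.1 z.2) (b := 0)
        (g := fun t : ℝ => (S / q - 1 + t, P / p + 1 + -t))
        (by simpa using hmax) (by fun_prop)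
    refine not_isLocalMax_sq_mul_sq_div (a := P * q) (b := -(S * p)) hpq h ?_
    simpa [rhoBar_shift P S p q _ _ hp hq, sq] using hanti
end

section
/- Let I, J ≥ 3, let ε_k, γ_k ∈ ℝ with s_k := 1+2ε_k+γ_k (k = 1,2), and let η₁ : {2,…,I−1} → ℝ and η₂ : {2,…,J−1} → ℝ. Define R₁(2) = s₁ and R₁(i) = s₁ + (η₁(i−1)−ε₁)(η₁(i)+ε₁)/R₁(i−1) for 3 ≤ i ≤ I−1, and R₂(J−1) = s₂ and R₂(j) = s₂ + (η₂(j)−ε₂)(η₂(j+1)+ε₂)/R₂(j+1) for 2 ≤ j ≤ J−2; assume R₁(i) ≠ 0 for 2 ≤ i ≤ I−1 and R₂(j) ≠ 0 for 2 ≤ j ≤ J−1. Suppose the error sequences e₁^m ∈ ℝ^I, e₂^m ∈ ℝ^J satisfy, for every m ≥ 1: e₁^m_1 = 0 and e₂^m_J = 0; −(η₁(i)+ε₁)e₁^m_{i−1} + s₁ e₁^m_i + (η₁(i)−ε₁)e₁^m_{i+1} = 0 for 2 ≤ i ≤ I−1; −(η₂(j)+ε₂)e₂^m_{j−1} + s₂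 e₂^m_j + (η₂(j)−ε₂)e₂^m_{j+1} = 0 for 2 ≤ j ≤ J−1; and the classic interface conditions e₁^m_I = e₂^{m−1}_2 and e₂^m_1 = e₁^{m−1}_{I−1}. Then, with ρ̄ := −(η₁(I−1)−ε₁)(η₂(2)+ε₂)/(R₁(I−1)·R₂(2)), for every m ≥ 1 one has e₁^{m+2}_i = ρ̄·e₁^m_i for all 1 ≤ i ≤ I and e₂^{m+2}_j = ρ̄·e₂^m_j for all 1 ≤ j ≤ J. -/
/-!
Each subdomain problem is a tridiagonal system with a homogeneous Dirichlet condition at its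
outer end. Gaussian elimination started from that end (the Thomas algorithm, with pivots
`R₁`, `R₂`) gives `R₁(I-1) e₁(I-1) = -(η₁(I-1) - ε₁) e₁(I)` and `R₂(2) e₂(2) = (η₂(2) + ε₂) e₂(1)`.
Passing these through the two interface conditions multiplies each interface value by `ρ̄` over
two iterations, and a subdomain solution is determined linearly by its interface value, so the
whole error is multiplied by `ρ̄`.
-/

/-- Nodes are `1, …, n`; the equations hold at the interior nodes `2, …, n - 1`, with the
sub-diagonal entering with a minus sign as in the scheme. -/
def TridiagonalEq (n : ℕ) (a b c x : ℕ → ℝ) : Prop :=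
  ∀ i, 2 ≤ i → i ≤ n - 1 → -a i * x (i - 1) + b i * x i + c i * x (i + 1) = 0

structure IsForwardPivots (n : ℕ) (a b c R : ℕ → ℝ) : Prop where
  base : R 2 = b 2
  succ : ∀ i, 3 ≤ i → i ≤ n - 1 → R i = b i + c (i - 1) * a i / R (i - 1)

structure IsBackwardPivots (n : ℕ) (a b c R : ℕ → ℝ) : Prop where
  base : R (n - 1) = b (n - 1)
  pred : ∀ j, 2 ≤ j → j ≤ n - 2 → R j = b j + c j * a (j + 1) / R (j + 1)

section

variable {n : ℕ} {a b c R x y : ℕ → ℝ}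

theorem TridiagonalEq.sub_mul (hx : TridiagonalEq n a b c x) (hy : TridiagonalEq n a b c y)
    (ρ : ℝ) : TridiagonalEq n a b c (fun i => x i - ρ * y i) := fun i hi hin => by
  linear_combination hx i hi hin - ρ * hy i hi hin

theorem IsForwardPivots.eliminate (hR : IsForwardPivots n a b c R)
    (hR0 : ∀ i, 2 ≤ i → i ≤ n - 2 → R i ≠ 0) (hx : TridiagonalEq n a b c x) (hx1 : x 1 = 0) :
    ∀ i, 2 ≤ i → i ≤ n - 1 → R i * x i = -c i * x (i + 1) := by
  intro i hi
  induction i, hi using Nat.le_induction with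
  | base =>
    intro hn
    have h := hx 2 le_rfl hn
    rw [show 2 - 1 = 1 from rfl, hx1] at h
    rw [hR.base]
    linear_combination h
  | succ i hi ih =>
    intro hn
    have hprev := ih (by omega)
    have h := hx (i + 1) (by omega) hn
    rw [hR.succ (i + 1) (by omega) hn]
    simp only [Nat.add_sub_cancel] at h ⊢
    field_simp [hR0 i hi (by omega)]
    linear_combination R i * h + a (i + 1) * hprev

theorem IsBackwardPivots.eliminate (hR : IsBackwardPivots n a b c R)
    (hR0 : ∀ j, 3 ≤ j → j ≤ n - 1 → R j ≠ 0) (hx : TridiagonalEq n a b c x) (hxn : x n = 0) :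
    ∀ j, 2 ≤ j → j ≤ n - 1 → R j * x j = a j * x (j - 1) := by
  intro j hj hjn
  induction hjn using Nat.decreasingInduction with
  | self =>
    have h := hx (n - 1) hj le_rfl
    rw [Nat.sub_add_cancel (by omega), hxn] at h
    rw [hR.base]
    linear_combination h
  | of_succ j hjn ih =>
    have hnext := ih (by omega)
    have h := hx j hj (by omega)
    simp only [Nat.add_sub_cancel] at hnext
    rw [hR.pred j hj (by omega)]
    field_simp [hR0 (j + 1) (by omega) hjn]
    linear_combination R (j + 1) * h - c j * hnext

theorem IsForwardPivots.eliminate_last (hR : IsForwardPivots n a b c R)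
    (hR0 : ∀ i, 2 ≤ i → i ≤ n - 2 → R i ≠ 0) (hx : TridiagonalEq n a b c x) (hx1 : x 1 = 0)
    (hn : 3 ≤ n) : R (n - 1) * x (n - 1) = -c (n - 1) * x n := by
  simpa [Nat.sub_add_cancel (by omega : 1 ≤ n)] using
    hR.eliminate hR0 hx hx1 (n - 1) (by omega) le_rfl

theorem IsBackwardPivots.eliminate_first (hR : IsBackwardPivots n a b c R)
    (hR0 : ∀ j, 3 ≤ j → j ≤ n - 1 → R j ≠ 0) (hx : TridiagonalEq n a b c x) (hxn : x n = 0)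
    (hn : 3 ≤ n) : R 2 * x 2 = a 2 * x 1 :=
  hR.eliminate hR0 hx hxn 2 le_rfl (by omega)

theorem IsForwardPivots.eq_zero (hR : IsForwardPivots n a b c R)
    (hR0 : ∀ i, 2 ≤ i → i ≤ n - 1 → R i ≠ 0) (hx : TridiagonalEq n a b c x)
    (hx1 : x 1 = 0) (hxn : x n = 0) : ∀ i, 1 ≤ i → i ≤ n → x i = 0 := by
  intro i hi hin
  induction hin using Nat.decreasingInduction with
  | self => exact hxn
  | of_succ i hin ih =>
    obtain rfl | hi := hi.eq_or_lt
    · exact hx1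
    have h := hR.eliminate (fun k hk hkn => hR0 k hk (by omega)) hx hx1 i hi (by omega)
    rw [ih (by omega), mul_zero] at h
    exact (mul_eq_zero.mp h).resolve_left (hR0 i hi (by omega))

theorem IsBackwardPivots.eq_zero (hR : IsBackwardPivots n a b c R)
    (hR0 : ∀ j, 2 ≤ j → j ≤ n - 1 → R j ≠ 0) (hx : TridiagonalEq n a b c x)
    (hx1 : x 1 = 0) (hxn : x n = 0) : ∀ j, 1 ≤ j → j ≤ n → x j = 0 := by
  intro j hj
  induction j, hj using Nat.le_induction with
  | base => exact fun _ => hx1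
  | succ j hj ih =>
    intro hjn
    obtain rfl | hjn := hjn.eq_or_lt
    · exact hxn
    have h := hR.eliminate (fun k hk hkn => hR0 k (by omega) hkn) hx hxn (j + 1) (by omega)
      (by omega)
    rw [Nat.add_sub_cancel, ih (by omega), mul_zero] at h
    exact (mul_eq_zero.mp h).resolve_left (hR0 (j + 1) (by omega) (by omega))

theorem eq_div_mul_of_mul_eq_mul_of_mul_eq_mul {r r' k k' u v w : ℝ} (hr : r ≠ 0) (hr' : r' ≠ 0)
    (hu : r * u = k * v) (hw : r' * w = k' * u) : w = k' * k / (r' * r) * v := by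
  field_simp
  linear_combination r * hw + k' * hu

end

/-- Contraction factor of the implicit Schwarz iteration with classic (Dirichlet)
interface conditions for two coupled linearized viscous Burgers equations with reaction
terms, with node-dependent frozen advection parameters `η₁, η₂`: with
`ρ̄ = -(η₁(I-1)-ε₁)(η₂(2)+ε₂)/(R₁(I-1)·R₂(2))`, every error component is multiplied by
`ρ̄` after two Schwarz iterations. -/
theorem implicit_schwarz_contraction_classic_burgers
    (I J : ℕ) (hI : 3 ≤ I) (hJ : 3 ≤ J)
    (ε₁ ε₂ γ₁ γ₂ : ℝ) (η₁ η₂ : ℕ → ℝ)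
    (R₁ R₂ : ℕ → ℝ)
    (hR₁base : R₁ 2 = 1 + 2 * ε₁ + γ₁)
    (hR₁rec : ∀ i : ℕ, 3 ≤ i → i ≤ I - 1 →
      R₁ i = 1 + 2 * ε₁ + γ₁ + (η₁ (i - 1) - ε₁) * (η₁ i + ε₁) / R₁ (i - 1))
    (hR₂base : R₂ (J - 1) = 1 + 2 * ε₂ + γ₂)
    (hR₂rec : ∀ j : ℕ, 2 ≤ j → j ≤ J - 2 →
      R₂ j = 1 + 2 * ε₂ + γ₂ + (η₂ j - ε₂) * (η₂ (j + 1) + ε₂) / R₂ (j + 1))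
    (hR₁ne : ∀ i : ℕ, 2 ≤ i → i ≤ I - 1 → R₁ i ≠ 0)
    (hR₂ne : ∀ j : ℕ, 2 ≤ j → j ≤ J - 1 → R₂ j ≠ 0)
    (e₁ e₂ : ℕ → ℕ → ℝ)
    (hb₁ : ∀ m : ℕ, 1 ≤ m → e₁ m 1 = 0)
    (hb₂ : ∀ m : ℕ, 1 ≤ m → e₂ m J = 0)
    (heq₁ : ∀ m : ℕ, 1 ≤ m → ∀ i : ℕ, 2 ≤ i → i ≤ I - 1 →
      -(η₁ i + ε₁) * e₁ m (i - 1) + (1 + 2 * ε₁ + γ₁) * e₁ m i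
        + (η₁ i - ε₁) * e₁ m (i + 1) = 0)
    (heq₂ : ∀ m : ℕ, 1 ≤ m → ∀ j : ℕ, 2 ≤ j → j ≤ J - 1 →
      -(η₂ j + ε₂) * e₂ m (j - 1) + (1 + 2 * ε₂ + γ₂) * e₂ m j
        + (η₂ j - ε₂) * e₂ m (j + 1) = 0)
    (hint₁ : ∀ m : ℕ, e₁ (m + 1) I = e₂ m 2)
    (hint₂ : ∀ m : ℕ, e₂ (m + 1) 1 = e₁ m (I - 1)) :
    ∀ m : ℕ, 1 ≤ m →
      (∀ i : ℕ, 1 ≤ i → i ≤ I →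
        e₁ (m + 2) i
          = -((η₁ (I - 1) - ε₁) * (η₂ 2 + ε₂)) / (R₁ (I - 1) * R₂ 2) * e₁ m i) ∧
      (∀ j : ℕ, 1 ≤ j → j ≤ J →
        e₂ (m + 2) j
          = -((η₁ (I - 1) - ε₁) * (η₂ 2 + ε₂)) / (R₁ (I - 1) * R₂ 2) * e₂ m j) := by
  intro m hm
  have piv₁ : IsForwardPivots I (fun i => η₁ i + ε₁) (fun _ => 1 + 2 * ε₁ + γ₁)
      (fun i => η₁ i - ε₁) R₁ := ⟨hR₁base, hR₁rec⟩
  have piv₂ : IsBackwardPivots J (fun j => η₂ j + ε₂) (fun _ => 1 + 2 * ε₂ + γ₂)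
      (fun j => η₂ j - ε₂) R₂ := ⟨hR₂base, hR₂rec⟩
  have sweep₁ (k : ℕ) (hk : 1 ≤ k) :=
    piv₁.eliminate_last (fun i hi _ => hR₁ne i hi (by omega)) (heq₁ k hk) (hb₁ k hk) hI
  have sweep₂ (k : ℕ) (hk : 1 ≤ k) :=
    piv₂.eliminate_first (fun j _ hj => hR₂ne j (by omega) hj) (heq₂ k hk) (hb₂ k hk) hJ
  have hR₁' := hR₁ne (I - 1) (by omega) le_rfl
  have hR₂' := hR₂ne 2 le_rfl (by omega)
  set ρ := -((η₁ (I - 1) - ε₁) * (η₂ 2 + ε₂)) / (R₁ (I - 1) * R₂ 2)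
  have contract₁ : e₁ (m + 2) I = ρ * e₁ m I := by
    have hw := sweep₂ (m + 1) (by omega)
    rw [← hint₁ (m + 1), hint₂ m] at hw
    rw [eq_div_mul_of_mul_eq_mul_of_mul_eq_mul hR₁' hR₂' (sweep₁ m hm) hw]
    ring
  have contract₂ : e₂ (m + 2) 1 = ρ * e₂ m 1 := by
    have hw := sweep₁ (m + 1) (by omega)
    rw [hint₁ m, ← hint₂ (m + 1)] at hw
    rw [eq_div_mul_of_mul_eq_mul_of_mul_eq_mul hR₂' hR₁' (sweep₂ m hm) hw]
    ring
  refine ⟨fun i hi hiI => sub_eq_zero.mp ?_, fun j hj hjJ => sub_eq_zero.mp ?_⟩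
  · refine piv₁.eq_zero hR₁ne (.sub_mul (heq₁ _ (by omega)) (heq₁ m hm) ρ) ?_ ?_ i hi hiI
    · simp [hb₁ _ (by omega : 1 ≤ m + 2), hb₁ m hm]
    · simp [contract₁]
  · refine piv₂.eq_zero hR₂ne (.sub_mul (heq₂ _ (by omega)) (heq₂ m hm) ρ) ?_ ?_ j hj hjJ
    · simp [contract₂]
    · simp [hb₂ _ (by omega : 1 ≤ m + 2), hb₂ m hm]
end

section
/- Let P, S, p, q ∈ ℝ with p ≠ 0, q ≠ 0 and PS + pq ≠ 0, where in the Burgers application P = R₁(I−1), S = R₂(2), p = η₁(I−1)−ε₁ and q = η₂(2)+ε₂, and define the contraction factor ρ̄(α,β) = −[((α+1)q − S)·((β−1)p − P)] / [((α+1)P + p)·((β−1)S + q)]. Then for the optimal parameters α* = S/q − 1 and β* = P/p + 1, the denominators (α*+1)P + p and (β*−1)S + q are nonzero, ρ̄(α*,β*) = 0 (so the Schwarz iteration with these optimized interface parameters converges within two iterations), and (α*,β*) is a saddle point of ρ̄: ρ̄ attains neither a local minimum nor a local maximum at (α*,β*). -/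
open Filter Topology

theorem not_isLocalMin_sub_mul_sub_mul {g : ℝ × ℝ → ℝ} {z : ℝ × ℝ} (hg : ContinuousAt g z)
    (hgz : g z ≠ 0) : ¬ IsLocalMin (fun w => (w.1 - z.1) * (w.2 - z.2) * g w) z := by
  intro hmin
  -- On the diagonal of slope `c` the factor `(w.1 - z.1) * (w.2 - z.2)` has the sign of `c`,
  -- so minimality forces `g ≥ 0` along slope `1` and `g ≤ 0` along slope `-1`.
  have along (c : ℝ) : Tendsto (fun s : ℝ => (z.1 + s, z.2 + c * s)) (𝓝[>] 0) (𝓝 z) := by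
    have hcont : Continuous fun s : ℝ => (z.1 + s, z.2 + c * s) := by fun_prop
    simpa using (hcont.tendsto 0).mono_left nhdsWithin_le_nhds
  have sign (c : ℝ) : ∀ᶠ s in 𝓝[>] (0 : ℝ), 0 ≤ c * g (z.1 + s, z.2 + c * s) := by
    filter_upwards [(along c).eventually hmin, self_mem_nhdsWithin] with s hs (hs0 : 0 < s)
    simp only [sub_self, zero_mul, add_sub_cancel_left] at hs
    nlinarith [mul_pos hs0 hs0]
  have hpos : 0 ≤ g z := ge_of_tendsto (hg.tendsto.comp (along 1)) (by simpa using sign 1)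
  have hneg : g z ≤ 0 := le_of_tendsto (hg.tendsto.comp (along (-1))) (by
    filter_upwards [sign (-1)] with s hs
    simp only [Function.comp]
    linarith)
  exact hgz (le_antisymm hneg hpos)

theorem not_isLocalMax_sub_mul_sub_mul {g : ℝ × ℝ → ℝ} {z : ℝ × ℝ} (hg : ContinuousAt g z)
    (hgz : g z ≠ 0) : ¬ IsLocalMax (fun w => (w.1 - z.1) * (w.2 - z.2) * g w) z := by
  intro hmax
  refine not_isLocalMin_sub_mul_sub_mul hg.neg (neg_ne_zero.mpr hgz) ?_
  simpa only [Pi.neg_apply, mul_neg] using hmax.neg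

section rhoBar

variable {P S p q : ℝ}

theorem rhoBar_optimal_alpha_denom_eq (hq : q ≠ 0) :
    (S / q - 1 + 1) * P + p = (P * S + p * q) / q := by
  field_simp
  ring

theorem rhoBar_optimal_beta_denom_eq (hp : p ≠ 0) :
    (P / p + 1 - 1) * S + q = (P * S + p * q) / p := by
  field_simp
  ring

/-- Both sides are `0` where the denominator vanishes, so the identity holds everywhere. -/
theorem rhoBar_eq_sub_mul_sub_mul (hp : p ≠ 0) (hq : q ≠ 0) (α β : ℝ) :
    rhoBar P S p q α β = (α - (S / q - 1)) * (β - (P / p + 1)) *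
      (-(q * p) / (((α + 1) * P + p) * ((β - 1) * S + q))) := by
  have hα : (α + 1) * q - S = (α - (S / q - 1)) * q := by field_simp; ring
  have hβ : (β - 1) * p - P = (β - (P / p + 1)) * p := by field_simp; ring
  rw [rhoBar, hα, hβ, mul_div_assoc']
  ring

end rhoBar

/-- For the optimal parameters `α* = S/q - 1`, `β* = P/p + 1` the denominators of the
contraction factor are nonzero, the contraction factor vanishes (so the Schwarz iteration
with these optimized interface parameters converges within two iterations), and
`(α*, β*)` is a saddle point: `ρ̄` attains neither a local minimum nor a local maximum
there. -/
theorem rhoBar_burgers_optimal_zero_saddle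
    (P S p q : ℝ) (hp : p ≠ 0) (hq : q ≠ 0) (h : P * S + p * q ≠ 0) :
    (S / q - 1 + 1) * P + p ≠ 0 ∧
    (P / p + 1 - 1) * S + q ≠ 0 ∧
    rhoBar P S p q (S / q - 1) (P / p + 1) = 0 ∧
    ¬ IsLocalMin (fun z : ℝ × ℝ => rhoBar P S p q z.1 z.2) (S / q - 1, P / p + 1) ∧
    ¬ IsLocalMax (fun z : ℝ × ℝ => rhoBar P S p q z.1 z.2) (S / q - 1, P / p + 1) := by
  have hα : (S / q - 1 + 1) * P + p ≠ 0 := by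
    rw [rhoBar_optimal_alpha_denom_eq hq]
    exact div_ne_zero h hq
  have hβ : (P / p + 1 - 1) * S + q ≠ 0 := by
    rw [rhoBar_optimal_beta_denom_eq hp]
    exact div_ne_zero h hp
  set g : ℝ × ℝ → ℝ := fun w => -(q * p) / (((w.1 + 1) * P + p) * ((w.2 - 1) * S + q))
  have hfun : (fun z : ℝ × ℝ => rhoBar P S p q z.1 z.2) =
      fun w => (w.1 - (S / q - 1, P / p + 1).1) * (w.2 - (S / q - 1, P / p + 1).2) * g w :=
    funext fun w => rhoBar_eq_sub_mul_sub_mul hp hq w.1 w.2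
  have hg : ContinuousAt g (S / q - 1, P / p + 1) :=
    continuousAt_const.div (by fun_prop) (mul_ne_zero hα hβ)
  have hgz : g (S / q - 1, P / p + 1) ≠ 0 :=
    div_ne_zero (neg_ne_zero.mpr (mul_ne_zero hq hp)) (mul_ne_zero hα hβ)
  refine ⟨hα, hβ, by simp [rhoBar_eq_sub_mul_sub_mul hp hq], ?_, ?_⟩
  · rw [hfun]
    exact not_isLocalMin_sub_mul_sub_mul hg hgz
  · rw [hfun]
    exact not_isLocalMax_sub_mul_sub_mul hg hgz
end
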